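/- Let Σ = {0,1,2,3} and let f : Σ^n → Σ be a {0,a}-semilinear n-ary quasigroup with f({0,a}^n) = {0,a}, and let {b,c} = Σ∖{0,a}. Then the isotopy (τ₀, τ₁, …, τₙ) with every τᵢ equal to the transposition (bc) is an autotopy of f. -/

import Mathlib

def IsNQuasigroup {α : Type} {n : ℕ} (f : (Fin n → α) → α) : Prop :=
  ∀ (i : Fin n) (x : Fin n → α), Function.Bijective (fun a => f (Function.update x i a))

def IsAutotopy {α : Type} {n : ℕ} (f : (Fin n → α) → α)
    (θ : Fin (n + 1) → Equiv.Perm α) : Prop :=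
  ∀ x : Fin n → α, f (fun i => θ i.succ (x i)) = θ 0 (f x)

def pairSet (a : Fin 4) (ε : Bool) : Set (Fin 4) :=
  if ε then {0, a} else ({0, a} : Set (Fin 4))ᶜ

def ZeroSemilinear {n : ℕ} (f : (Fin n → Fin 4) → Fin 4) (a : Fin 4) : Prop :=
  ∀ ε : Fin n → Bool, ∃ ε₀ : Bool,
    f '' {x | ∀ j : Fin n, x j ∈ pairSet a (ε j)} = pairSet a ε₀

/-!
Write `P = {0,a}` and let `σ = (0a)(bc)` be the involution exchanging the two elements of each of
the pairs `P` and `Σ ∖ P`. By semilinearity, replacing one argument `xⱼ` of `f` by `σ xⱼ` keeps the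
value in its pair, and since `f` is a quasigroup it changes the value, so it applies `σ` to the value.
Replacing `xⱼ` by an element of the other pair instead moves the value to the other pair. Starting
from `f(Pⁿ) ⊆ P`, the value `f x` therefore lies in `P` exactly when an even number of the `xⱼ` lie
outside `P`. Now `(bc)` acts on `x` as `σ` on the `m` coordinates outside `P`, so it changes `f x`
into `σᵐ (f x)`, which is `f x` for `m` even (then `f x ∈ P`) and `σ (f x)` for `m` odd (then
`f x ∉ P`): in both cases it is `(bc) (f x)`.
-/

open Function Finset

structure IsPairing {α : Type} (p : α → Prop) (σ : α → α) : Prop where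
  map_iff : ∀ u, p (σ u) ↔ p u
  ne : ∀ u, σ u ≠ u
  eq_or_eq : ∀ u v, (p u ↔ p v) → v = u ∨ v = σ u

theorem IsPairing.involutive {α : Type} {p : α → Prop} {σ : α → α} (hP : IsPairing p σ) :
    Involutive σ := fun u =>
  (hP.eq_or_eq u (σ (σ u)) ((hP.map_iff _).trans (hP.map_iff u)).symm).resolve_right
    (hP.ne (σ u))

def IsSemilinear {α : Type} {n : ℕ} (p : α → Prop) (f : (Fin n → α) → α) : Prop :=
  ∀ x y : Fin n → α, (∀ j, p (x j) ↔ p (y j)) → (p (f x) ↔ p (f y))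

theorem IsNQuasigroup.eq_of_apply_update_eq {α : Type} {n : ℕ} {f : (Fin n → α) → α}
    (hf : IsNQuasigroup f) {x : Fin n → α} {j : Fin n} {v w : α}
    (h : f (update x j v) = f (update x j w)) : v = w :=
  (hf j x).1 h

namespace IsSemilinear

variable {α : Type} {n : ℕ} {p : α → Prop} {σ : α → α} {f : (Fin n → α) → α}

theorem apply_update_pair (hs : IsSemilinear p f) (hP : IsPairing p σ) (hf : IsNQuasigroup f)
    (x : Fin n → α) (j : Fin n) : f (update x j (σ (x j))) = σ (f x) := by
  have hsame : p (f x) ↔ p (f (update x j (σ (x j)))) :=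
    hs _ _ ((forall_update_iff x fun k u => p (x k) ↔ p u).2
      ⟨(hP.map_iff _).symm, fun _ _ => Iff.rfl⟩)
  refine (hP.eq_or_eq _ _ hsame).resolve_left fun h => hP.ne (x j) ?_
  exact hf.eq_of_apply_update_eq (x := x) (j := j) (by rwa [update_eq_self])

theorem apply_piecewise (hs : IsSemilinear p f) (hP : IsPairing p σ) (hf : IsNQuasigroup f)
    (x : Fin n → α) (s : Finset (Fin n)) : f (s.piecewise (σ ∘ x) x) = σ^[#s] (f x) := by
  induction s using Finset.induction_on with
  | empty => simp
  | insert j s hj ih =>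
    have hxj : s.piecewise (σ ∘ x) x j = x j := s.piecewise_eq_of_notMem _ _ hj
    rw [piecewise_insert, card_insert_of_notMem hj, iterate_succ_apply', ← ih, comp_apply,
      ← hxj, hs.apply_update_pair hP hf]

theorem not_iff_apply_update (hs : IsSemilinear p f) (hP : IsPairing p σ) (hf : IsNQuasigroup f)
    (x : Fin n → α) (j : Fin n) {v : α} (hv : ¬(p v ↔ p (x j))) :
    ¬(p (f (update x j v)) ↔ p (f x)) := by
  intro hsame
  have hself : f x = f (update x j (x j)) := by rw [update_eq_self]
  rcases hP.eq_or_eq _ _ hsame.symm with h | h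
  · exact hv (by rw [hf.eq_of_apply_update_eq (h.trans hself)])
  · rw [← hs.apply_update_pair hP hf] at h
    exact hv (by rw [hf.eq_of_apply_update_eq h, hP.map_iff])

theorem iff_even_card (hs : IsSemilinear p f) (hP : IsPairing p σ) (hf : IsNQuasigroup f)
    {u₀ : α} (hu₀ : p u₀) (hbase : ∀ x, (∀ j, p (x j)) → p (f x)) (s : Finset (Fin n)) :
    ∀ x : Fin n → α, (∀ j, p (x j) ↔ j ∉ s) → (p (f x) ↔ Even #s) := by
  induction s using Finset.induction_on with
  | empty => simpa using hbase
  | insert j s hj ih =>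
    intro x hx
    have hxj : ¬p (x j) := by simp [hx]
    have hx' : ∀ k, p (update x j u₀ k) ↔ k ∉ s := by
      refine (forall_update_iff x fun k u => p u ↔ k ∉ s).2 ⟨by simpa [hj], fun k hk => ?_⟩
      simp [hx, hk]
    have hflip := hs.not_iff_apply_update hP hf x j (v := u₀) (by simpa [hu₀])
    rw [card_insert_of_notMem hj, Nat.even_add_one, ← ih _ hx']
    tauto

theorem isAutotopy (hs : IsSemilinear p f) (hP : IsPairing p σ) (hf : IsNQuasigroup f)
    {u₀ : α} (hu₀ : p u₀) (hbase : ∀ x, (∀ j, p (x j)) → p (f x)) {τ : Equiv.Perm α}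
    (hτp : ∀ u, p u → τ u = u) (hτσ : ∀ u, ¬p u → τ u = σ u) :
    IsAutotopy f (fun _ => τ) := by
  intro x
  let s := (Set.toFinite {j | ¬p (x j)}).toFinset
  have hx : ∀ j, p (x j) ↔ j ∉ s := by simp [s]
  have hτx : (fun j => τ (x j)) = s.piecewise (σ ∘ x) x := by
    funext j
    by_cases hj : j ∈ s
    · rw [s.piecewise_eq_of_mem _ _ hj, comp_apply, hτσ _ (by simpa [hx])]
    · rw [s.piecewise_eq_of_notMem _ _ hj, hτp _ (by simpa [hx])]
  have hfx : p (f x) ↔ Even #s := hs.iff_even_card hP hf hu₀ hbase s x hx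
  simp only [hτx, hs.apply_piecewise hP hf]
  rcases Nat.even_or_odd #s with heven | hodd
  · rw [hP.involutive.iterate_even heven, id, hτp _ (hfx.2 heven)]
  · rw [hP.involutive.iterate_odd hodd, hτσ _ (by rwa [hfx, Nat.not_even_iff_odd])]

end IsSemilinear

theorem mem_pairSet_iff {a u : Fin 4} {ε : Bool} :
    u ∈ pairSet a ε ↔ (u ∈ ({0, a} : Set (Fin 4)) ↔ ε = true) := by
  cases ε <;> simp [pairSet]

theorem ZeroSemilinear.isSemilinear {n : ℕ} {f : (Fin n → Fin 4) → Fin 4} {a : Fin 4}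
    (hsem : ZeroSemilinear f a) : IsSemilinear (· ∈ ({0, a} : Set (Fin 4))) f := by
  classical
  intro x y hxy
  obtain ⟨ε₀, hε₀⟩ := hsem fun j => decide (x j ∈ ({0, a} : Set (Fin 4)))
  have hblock : ∀ z : Fin n → Fin 4, (∀ j, z j ∈ ({0, a} : Set (Fin 4)) ↔ x j ∈ ({0, a} : Set _)) →
      (f z ∈ ({0, a} : Set (Fin 4)) ↔ ε₀ = true) := fun z hz =>
    mem_pairSet_iff.1 (hε₀ ▸ Set.mem_image_of_mem f fun j => mem_pairSet_iff.2 (by simp [hz]))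
  exact (hblock x fun _ => Iff.rfl).trans (hblock y fun j => (hxy j).symm).symm

section SwapMulSwap

variable {a b c : Fin 4}

theorem mem_pair_iff_of_compl (hcompl : ({b, c} : Set (Fin 4)) = ({0, a} : Set (Fin 4))ᶜ)
    (u : Fin 4) : (u = b ∨ u = c) ↔ ¬(u = 0 ∨ u = a) := by
  simpa using Set.ext_iff.1 hcompl u

theorem isPairing_swap_mul_swap (ha : a ≠ 0) (hbc : b ≠ c)
    (hcompl : ({b, c} : Set (Fin 4)) = ({0, a} : Set (Fin 4))ᶜ) :
    IsPairing (· ∈ ({0, a} : Set (Fin 4))) ⇑(Equiv.swap 0 a * Equiv.swap b c) := by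
  -- with `hcompl` in decidable form, this is a finite check over `a b c : Fin 4`
  have h := mem_pair_iff_of_compl hcompl
  simp only [Set.mem_insert_iff, Set.mem_singleton_iff]
  clear hcompl
  refine ⟨?_, ?_, ?_⟩ <;> revert a b c <;> decide

theorem swap_apply_of_mem_pair (hcompl : ({b, c} : Set (Fin 4)) = ({0, a} : Set (Fin 4))ᶜ)
    {u : Fin 4} (hu : u ∈ ({0, a} : Set (Fin 4))) : Equiv.swap b c u = u := by
  have h := mem_pair_iff_of_compl hcompl
  simp only [Set.mem_insert_iff, Set.mem_singleton_iff] at hu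
  clear hcompl
  revert a b c u; decide

theorem swap_apply_of_not_mem_pair (hcompl : ({b, c} : Set (Fin 4)) = ({0, a} : Set (Fin 4))ᶜ)
    {u : Fin 4} (hu : u ∉ ({0, a} : Set (Fin 4))) :
    Equiv.swap b c u = (Equiv.swap 0 a * Equiv.swap b c) u := by
  have h := mem_pair_iff_of_compl hcompl
  simp only [Set.mem_insert_iff, Set.mem_singleton_iff] at hu
  clear hcompl
  revert a b c u; decide

end SwapMulSwap

/-- If `f` is a `{0,a}`-semilinear quasigroup with `f({0,a}ⁿ) = {0,a}` and
`{b,c} = Σ ∖ {0,a}`, then the isotopy all of whose components equal the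
transposition `(bc)` is an autotopy of `f`. -/
theorem native_transpositions_autotopy {n : ℕ} (f : (Fin n → Fin 4) → Fin 4)
    (hf : IsNQuasigroup f) (a : Fin 4) (ha : a ≠ 0) (hsem : ZeroSemilinear f a)
    (hval : f '' {x | ∀ j : Fin n, x j ∈ ({0, a} : Set (Fin 4))} = {0, a})
    (b c : Fin 4) (hbc : b ≠ c) (hcompl : ({b, c} : Set (Fin 4)) = ({0, a} : Set (Fin 4))ᶜ) :
    IsAutotopy f (fun _ => Equiv.swap b c) :=
  hsem.isSemilinear.isAutotopy (isPairing_swap_mul_swap ha hbc hcompl) hf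
    (u₀ := 0) (Set.mem_insert 0 _) (fun _ hx => hval ▸ Set.mem_image_of_mem f hx)
    (fun _ => swap_apply_of_mem_pair hcompl) (fun _ => swap_apply_of_not_mem_pair hcompl)
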